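/- Let H be the unital associative ℚ(q)-algebra generated by elements p⁺_m, p⁻_m for m ≥ 1 subject to the relations p⁺_m p⁺_n = p⁺_n p⁺_m, p⁻_m p⁻_n = p⁻_n p⁻_m, and p⁻_m p⁺_n = p⁺_n p⁻_m + δ_{mn} [nχ] n/[n], for a fixed nonnegative integer χ. Set h⁺_n and h⁻_n via Σ h^±_n t^n = exp(Σ_{r≥1} p^±_r t^r/r) in H[[t]]. Then for all m, n ≥ 0: h⁻_n h⁺_m = Σ_{r=0}^{min(m,n)} c_r h⁺_{m-r} h⁻_{n-r}, where Σ_{r≥0} c_r u^r = Π_{g=0}^{χ-1} (1 - q^{χ-(2g+1)} u)^{-1}, i.e., c_r = qdim(S^r(V)) for any graded vector space V with qdim(V) = [χ]. -/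

import Mathlib

/-!
Put `E⁺(X) = Σ h⁺_m X^m`, `E⁻(Y) = Σ h⁻_n Y^n`, `P⁻(Y) = Σ p⁻_k Y^k` and `θ = Y d/dY`.
Since the `p⁻_k` commute, Newton's identity `θ E⁻ = P⁻ E⁻` holds. A first-order equation
`θ Z = P Z` with `P(0) = 0` has at most one solution with a given constant term, because
`n Z_n` is determined by `Z_0, …, Z_{n-1}`.

By the factorization `[kχ] = [k] Σ_g α_g^k`, `α_g = q^{χ-2g-1}`, the relations read
`[p⁻_k, p⁺_r] = δ_{kr} k b_k`, where `b(u) = Σ_{k ≥ 1} (Σ_g α_g^k) u^k = u c'(u) / c(u)` for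
`c(u) = Π_g (1 - α_g u)⁻¹`. The uniqueness argument in the variable `X` turns them into
`P⁻ E⁺ = E⁺ P⁻ + b(XY) E⁺`. Hence `E⁻ E⁺` and `c(XY) E⁺ E⁻` both solve `θ Z = P⁻ Z` with
constant term `E⁺`, so they are equal; comparing coefficients of `X^m Y^n` gives the formula.
-/

/-- The quantum integer `[n] = q^{-n+1} + q^{-n+3} + ⋯ + q^{n-1}` in `ℚ(q)`. -/
noncomputable def qIntF (n : ℕ) : RatFunc ℚ :=
  ∑ g ∈ Finset.range n, RatFunc.X ^ ((n : ℤ) - (2 * g + 1))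

/-- The formal exponential `exp f = Σ_{n≥0} f^n / n!` of a formal power series
over a (possibly noncommutative) ℚ-algebra, computed coefficientwise; it is
meaningful when the constant coefficient of `f` is zero. -/
noncomputable def expH {H : Type*} [Ring H] [Algebra ℚ H] (f : PowerSeries H) :
    PowerSeries H :=
  PowerSeries.mk fun d => ∑ n ∈ Finset.range (d + 1),
    ((Nat.factorial n : ℚ)⁻¹) • PowerSeries.coeff (R := H) d (f ^ n)

open Finset

namespace PowerSeries

section Semiring

variable {R : Type*} [Semiring R]

/-- `X d/dX`; Mathlib's `PowerSeries.derivative` needs a commutative ring. -/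
noncomputable def eulerOp : R⟦X⟧ →+ R⟦X⟧ where
  toFun f := mk fun n => n • coeff n f
  map_zero' := by ext; simp
  map_add' f g := by ext; simp

@[simp]
theorem coeff_eulerOp (f : R⟦X⟧) (n : ℕ) : coeff n (eulerOp f) = n • coeff n f :=
  coeff_mk n fun n => n • coeff n f

@[simp]
theorem constantCoeff_eulerOp (f : R⟦X⟧) : constantCoeff (eulerOp f) = 0 := by
  rw [← coeff_zero_eq_constantCoeff_apply, coeff_eulerOp, zero_smul]

theorem eulerOp_mul (f g : R⟦X⟧) : eulerOp (f * g) = eulerOp f * g + f * eulerOp g := by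
  ext n
  simp only [coeff_eulerOp, map_add, coeff_mul, smul_sum, ← sum_add_distrib]
  refine sum_congr rfl fun ij hij => ?_
  rw [HasAntidiagonal.mem_antidiagonal] at hij
  rw [← hij, add_smul, smul_mul_assoc, mul_smul_comm]

@[simp]
theorem eulerOp_C (a : R) : eulerOp (C a) = 0 := by
  ext n
  rcases n with _ | n <;> simp [coeff_C]

@[simp]
theorem eulerOp_one : eulerOp (1 : R⟦X⟧) = 0 := by
  simpa using eulerOp_C (1 : R)

@[simp]
theorem eulerOp_X : eulerOp (X : R⟦X⟧) = X := by
  ext n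
  rw [coeff_eulerOp, coeff_X]
  split_ifs with h <;> simp [h]

@[simp]
theorem eulerOp_monomial (k : ℕ) (a : R) : eulerOp (monomial k a) = monomial k (k • a) := by
  ext n
  simp only [coeff_eulerOp, coeff_monomial]
  split_ifs with h <;> simp [h]

theorem eulerOp_smul {S : Type*} [Semiring S] [Module S R] [SMulCommClass ℕ S R] (s : S)
    (f : R⟦X⟧) : eulerOp (s • f) = s • eulerOp f := by
  ext n
  simp [coeff_smul, smul_comm]

theorem eulerOp_map {S : Type*} [Semiring S] (φ : R →+* S) (f : R⟦X⟧) :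
    eulerOp (map φ f) = map φ (eulerOp f) := by
  ext n
  simp

theorem constantCoeff_map {S : Type*} [Semiring S] (φ : R →+* S) (f : R⟦X⟧) :
    constantCoeff (map φ f) = φ (constantCoeff f) := by
  rw [← coeff_zero_eq_constantCoeff_apply, coeff_map, coeff_zero_eq_constantCoeff_apply]

theorem eulerOp_pow {F : R⟦X⟧} (hF : Commute F (eulerOp F)) (n : ℕ) :
    eulerOp (F ^ (n + 1)) = (n + 1) • (eulerOp F * F ^ n) := by
  induction n with
  | zero => simp
  | succ n ih =>
    rw [pow_succ, eulerOp_mul, ih, ← (hF.symm.pow_right (n + 1)).eq, smul_mul_assoc, mul_assoc,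
      ← pow_succ, succ_nsmul _ (n + 1)]

theorem commute_of_forall_coeff_commute {f g : R⟦X⟧}
    (h : ∀ i j, Commute (coeff i f) (coeff j g)) : Commute f g := by
  ext n
  rw [coeff_mul, coeff_mul, ← Nat.sum_antidiagonal_swap]
  exact sum_congr rfl fun ij _ => (h ij.2 ij.1).eq

theorem coeff_pow_eq_zero {F : R⟦X⟧} (hF : constantCoeff F = 0) {d n : ℕ} (h : d < n) :
    coeff d (F ^ n) = 0 :=
  coeff_of_lt_order d ((Nat.cast_lt.mpr h).trans_le (le_order_pow_of_constantCoeff_eq_zero n hF))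

theorem coeff_mul_eq_of_coeff_eq {f g g' : R⟦X⟧} {d : ℕ}
    (h : ∀ j ≤ d, coeff j g = coeff j g') : coeff d (f * g) = coeff d (f * g') := by
  rw [coeff_mul, coeff_mul]
  refine sum_congr rfl fun ij hij => ?_
  rw [HasAntidiagonal.mem_antidiagonal] at hij
  rw [h ij.2 (by omega)]

theorem coeff_monomial_mul (m r : ℕ) (a : R) (f : R⟦X⟧) :
    coeff m (monomial r a * f) = if r ≤ m then a * coeff (m - r) f else 0 := by
  rw [monomial_eq_C_mul_X_pow, mul_assoc, coeff_C_mul, coeff_X_pow_mul', mul_ite, mul_zero]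

theorem sum_antidiagonal_coeff_monomial_mul (a e : ℕ → R) (g : R⟦X⟧) (m n : ℕ) :
    ∑ ij ∈ antidiagonal n, coeff m (monomial ij.1 (a ij.1) * g) * e ij.2
      = ∑ r ∈ range (min m n + 1), a r * (coeff (m - r) g * e (n - r)) := by
  rw [Nat.sum_antidiagonal_eq_sum_range_succ_mk]
  simp only [coeff_monomial_mul, ite_zero_mul, ← sum_filter, mul_assoc]
  congr 1
  ext r
  simp only [mem_filter, mem_range]
  omega

theorem commute_monomial_algebraMap {K : Type*} [CommSemiring K] [Algebra K R] (k : ℕ) (a : K)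
    (f : R⟦X⟧) : Commute (monomial k (algebraMap K R a)) f :=
  commute_of_forall_coeff_commute fun i j => by
    rw [coeff_monomial]
    split_ifs
    exacts [Algebra.commute_algebraMap_left a _, Commute.zero_left _]

end Semiring

/-- The substitution `u ↦ X Y` into `A⟦X⟧⟦Y⟧`, where `Y` is the outer variable. -/
noncomputable def diagSubst (K A : Type*) [CommSemiring K] [Semiring A] [Algebra K A] :
    K⟦X⟧ →+* A⟦X⟧⟦X⟧ :=
  (map (map (algebraMap K A))).comp ((rescale (X : K⟦X⟧)).comp (map C))

section Diag

variable {K A : Type*} [CommSemiring K] [Semiring A] [Algebra K A]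

theorem coeff_diagSubst (f : K⟦X⟧) (n : ℕ) :
    coeff n (diagSubst K A f) = monomial n (algebraMap K A (coeff n f)) := by
  simp only [diagSubst, RingHom.comp_apply, coeff_map, coeff_rescale, map_mul, map_pow, map_X,
    map_C, monomial_eq_C_mul_X_pow]
  exact (commute_X_pow (C (algebraMap K A (coeff n f))) n).eq.symm

theorem constantCoeff_diagSubst (f : K⟦X⟧) :
    constantCoeff (diagSubst K A f) = C (algebraMap K A (constantCoeff f)) := by
  rw [← coeff_zero_eq_constantCoeff_apply, coeff_diagSubst, coeff_zero_eq_constantCoeff_apply,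
    monomial_zero_eq_C]

theorem eulerOp_diagSubst (f : K⟦X⟧) : eulerOp (diagSubst K A f) = diagSubst K A (eulerOp f) := by
  ext1 n
  rw [coeff_eulerOp, coeff_diagSubst, coeff_diagSubst, coeff_eulerOp, map_nsmul, map_nsmul]

end Diag

section Rat

variable {R : Type*} [Ring R] [Algebra ℚ R]

theorem eq_zero_of_eulerOp_eq_mul {P D : R⟦X⟧} (hP : constantCoeff P = 0)
    (hD : eulerOp D = P * D) (h0 : constantCoeff D = 0) : D = 0 := by
  ext n
  induction n using Nat.strong_induction_on with
  | _ n ih =>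
    rcases Nat.eq_zero_or_pos n with rfl | hn
    · simpa using h0
    have hsmul : n • coeff n D = 0 := by
      rw [← coeff_eulerOp, hD, coeff_mul]
      refine sum_eq_zero fun ij hij => ?_
      rw [HasAntidiagonal.mem_antidiagonal] at hij
      rcases Nat.eq_zero_or_pos ij.1 with h1 | h1
      · rw [h1, coeff_zero_eq_constantCoeff_apply, hP, zero_mul]
      · rw [ih ij.2 (by omega), map_zero, mul_zero]
    rw [map_zero, ← inv_smul_smul₀ (Nat.cast_ne_zero.mpr hn.ne' : (n : ℚ) ≠ 0) (coeff n D),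
      Nat.cast_smul_eq_nsmul, hsmul, smul_zero]

noncomputable def expTrunc (F : R⟦X⟧) (N : ℕ) : R⟦X⟧ :=
  ∑ n ∈ range N, (n.factorial : ℚ)⁻¹ • F ^ n

@[simp]
theorem constantCoeff_expH (F : R⟦X⟧) : constantCoeff (expH F) = 1 := by
  rw [← coeff_zero_eq_constantCoeff_apply, expH, coeff_mk]
  simp

theorem coeff_expH_eq_coeff_expTrunc {F : R⟦X⟧} (hF : constantCoeff F = 0) {d N : ℕ}
    (h : d < N) : coeff d (expH F) = coeff d (expTrunc F N) := by
  simp only [expH, expTrunc, coeff_mk, map_sum, coeff_smul]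
  refine sum_subset (range_subset_range.mpr h) fun n _ hn => ?_
  rw [coeff_pow_eq_zero hF (by simpa using hn), smul_zero]

theorem eulerOp_expTrunc_succ {F : R⟦X⟧} (hF : Commute F (eulerOp F)) (N : ℕ) :
    eulerOp (expTrunc F (N + 1)) = eulerOp F * expTrunc F N := by
  rw [expTrunc, expTrunc, map_sum, sum_range_succ', pow_zero, eulerOp_smul, eulerOp_one,
    smul_zero, add_zero, mul_sum]
  refine sum_congr rfl fun n _ => ?_
  rw [eulerOp_smul, eulerOp_pow hF, ← Nat.cast_smul_eq_nsmul ℚ, smul_smul, mul_smul_comm]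
  congr 1
  rw [Nat.factorial_succ]
  push_cast
  field_simp

/-- Newton's identity `n h_n = Σ_k p_k h_{n-k}` for `h = expH F`, `p = eulerOp F`. -/
theorem eulerOp_expH {F : R⟦X⟧} (hF0 : constantCoeff F = 0) (hF : Commute F (eulerOp F)) :
    eulerOp (expH F) = eulerOp F * expH F := by
  ext d
  rw [coeff_eulerOp, coeff_expH_eq_coeff_expTrunc hF0 (by omega : d < d + 2), ← coeff_eulerOp,
    eulerOp_expTrunc_succ hF, coeff_mul_eq_of_coeff_eq]
  exact fun j hj => (coeff_expH_eq_coeff_expTrunc hF0 (by omega : j < d + 1)).symm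

theorem C_mul_expH_of_C_mul_eulerOp {F Q : R⟦X⟧} (x : R) (hF0 : constantCoeff F = 0)
    (hF : Commute F (eulerOp F)) (hQ0 : constantCoeff Q = 0) (hQ : Commute Q (eulerOp F))
    (hx : C x * eulerOp F = eulerOp F * C x + eulerOp Q) :
    C x * expH F = expH F * C x + Q * expH F := by
  rw [← sub_eq_zero]
  refine eq_zero_of_eulerOp_eq_mul (constantCoeff_eulerOp F) ?_ (by simp [hQ0])
  simp only [map_sub, map_add, eulerOp_mul, eulerOp_C, eulerOp_expH hF0 hF, zero_mul, add_zero,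
    zero_add, mul_zero]
  rw [← mul_assoc, hx, ← mul_assoc Q, hQ.eq]
  noncomm_ring

end Rat

section NormalOrdering

variable {K A : Type*} [CommSemiring K] [Ring A] [Algebra K A] [Algebra ℚ A]

/-- `E⁻(Y) E⁺(X) = c(XY) E⁺(X) E⁻(Y)`, with `Y` the outer variable. -/
theorem map_C_expH_mul_C_expH {Fp Fm : A⟦X⟧} {b c : K⟦X⟧}
    (hFp0 : constantCoeff Fp = 0) (hFm0 : constantCoeff Fm = 0)
    (hFp : Commute Fp (eulerOp Fp)) (hFm : Commute Fm (eulerOp Fm))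
    (hb0 : constantCoeff b = 0) (hc0 : constantCoeff c = 1) (hbc : eulerOp c = b * c)
    (hcomm : ∀ k, C (coeff k (eulerOp Fm)) * eulerOp Fp
      = eulerOp Fp * C (coeff k (eulerOp Fm)) + eulerOp (monomial k (algebraMap K A (coeff k b)))) :
    map C (expH Fm) * C (expH Fp) = diagSubst K A c * C (expH Fp) * map C (expH Fm) := by
  set E := map C (expH Fm)
  set G : A⟦X⟧⟦X⟧ := C (expH Fp)
  set P := map C (eulerOp Fm)
  have hP0 : constantCoeff P = 0 := by rw [constantCoeff_map, constantCoeff_eulerOp, map_zero]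
  have hE0 : constantCoeff E = 1 := by rw [constantCoeff_map, constantCoeff_expH, map_one]
  have hE : eulerOp E = P * E := by rw [eulerOp_map, eulerOp_expH hFm0 hFm, map_mul]
  have hPG : P * G = G * P + diagSubst K A b * G := by
    ext1 k
    have hQ0 : constantCoeff (monomial k (algebraMap K A (coeff k b))) = 0 := by
      rw [← coeff_zero_eq_constantCoeff_apply, coeff_monomial]
      split_ifs with hk
      · rw [← hk, coeff_zero_eq_constantCoeff_apply, hb0, map_zero]
      · rfl
    rw [map_add, coeff_mul_C, coeff_C_mul, coeff_mul_C, coeff_map, coeff_diagSubst]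
    exact C_mul_expH_of_C_mul_eulerOp _ hFp0 hFp hQ0 (commute_monomial_algebraMap _ _ _) (hcomm k)
  have hPc : Commute P (diagSubst K A c) := commute_of_forall_coeff_commute fun i j => by
    rw [coeff_diagSubst]
    exact (commute_monomial_algebraMap _ _ _).symm
  have hc : eulerOp (diagSubst K A c) = diagSubst K A b * diagSubst K A c := by
    rw [eulerOp_diagSubst, hbc, map_mul]
  have hbc_comm : Commute (diagSubst K A b) (diagSubst K A c) := (Commute.all b c).map _
  have hPcGE : P * (diagSubst K A c * G * E)
      = diagSubst K A c * G * (P * E) + diagSubst K A b * diagSubst K A c * G * E := by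
    rw [← mul_assoc, ← mul_assoc, hPc.eq, mul_assoc _ P, hPG, hbc_comm.eq]
    noncomm_ring
  rw [← sub_eq_zero]
  refine eq_zero_of_eulerOp_eq_mul hP0 ?_ (by simp [hE0, constantCoeff_diagSubst, hc0])
  simp only [map_sub, eulerOp_mul, hE, hc, G, eulerOp_C, mul_zero, add_zero]
  rw [mul_sub, hPcGE]
  noncomm_ring

theorem coeff_expH_mul_coeff_expH {Fp Fm : A⟦X⟧} {b c : K⟦X⟧}
    (hFp0 : constantCoeff Fp = 0) (hFm0 : constantCoeff Fm = 0)
    (hFp : Commute Fp (eulerOp Fp)) (hFm : Commute Fm (eulerOp Fm))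
    (hb0 : constantCoeff b = 0) (hc0 : constantCoeff c = 1) (hbc : eulerOp c = b * c)
    (hcomm : ∀ k, C (coeff k (eulerOp Fm)) * eulerOp Fp
      = eulerOp Fp * C (coeff k (eulerOp Fm)) + eulerOp (monomial k (algebraMap K A (coeff k b))))
    (m n : ℕ) :
    coeff n (expH Fm) * coeff m (expH Fp) = ∑ r ∈ range (min m n + 1),
      algebraMap K A (coeff r c) * (coeff (m - r) (expH Fp) * coeff (n - r) (expH Fm)) := by
  have h := congrArg (fun S => coeff m (coeff n S))
    (map_C_expH_mul_C_expH hFp0 hFm0 hFp hFm hb0 hc0 hbc hcomm)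
  rw [coeff_mul_C, coeff_map, coeff_C_mul, coeff_mul, map_sum] at h
  simp only [coeff_mul_C, coeff_map, coeff_diagSubst] at h
  exact h.trans (sum_antidiagonal_coeff_monomial_mul (fun r => algebraMap K A (coeff r c))
    (fun j => coeff j (expH Fm)) _ m n)

end NormalOrdering

section PowerSums

variable {K ι : Type*} [CommRing K]

/-- The logarithmic derivative `X d/dX log` of `Π_{g ∈ s} (1 - α_g X)⁻¹`. -/
noncomputable def powerSumSeries (s : Finset ι) (α : ι → K) : K⟦X⟧ :=
  ∑ g ∈ s, (rescale (α g) (mk 1) - 1)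

theorem coeff_powerSumSeries (s : Finset ι) (α : ι → K) {k : ℕ} (hk : k ≠ 0) :
    coeff k (powerSumSeries s α) = ∑ g ∈ s, α g ^ k := by
  simp only [powerSumSeries, map_sum, map_sub, coeff_rescale, coeff_mk, Pi.one_apply, mul_one,
    coeff_one, if_neg hk, sub_zero]

theorem constantCoeff_powerSumSeries (s : Finset ι) (α : ι → K) :
    constantCoeff (powerSumSeries s α) = 0 := by
  rw [← coeff_zero_eq_constantCoeff_apply]
  simp only [powerSumSeries, map_sum, map_sub, coeff_rescale, coeff_mk, Pi.one_apply, pow_zero,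
    mul_one, coeff_zero_eq_constantCoeff_apply, map_one, sub_self, sum_const_zero]

theorem rescale_mk_one_mul_one_sub (a : K) : rescale a (mk 1) * (1 - C a * X) = 1 := by
  rw [← rescale_X, ← map_one (rescale a), ← map_sub, ← map_mul, mk_one_mul_one_sub_eq_one,
    map_one]

theorem eulerOp_prod_one_sub (s : Finset ι) (α : ι → K) :
    eulerOp (∏ g ∈ s, (1 - C (α g) * X))
      = -powerSumSeries s α * ∏ g ∈ s, (1 - C (α g) * X) := by
  classical
  induction s using Finset.induction_on with
  | empty => simp [powerSumSeries]
  | insert a s ha ih =>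
    have hgeom := rescale_mk_one_mul_one_sub (α a)
    rw [prod_insert ha, eulerOp_mul, ih]
    simp only [powerSumSeries, sum_insert ha, map_sub, eulerOp_one, eulerOp_mul, eulerOp_C,
      eulerOp_X, zero_mul, zero_add]
    linear_combination (∏ g ∈ s, (1 - C (α g) * X)) * hgeom

theorem eulerOp_eq_powerSumSeries_mul {s : Finset ι} {α : ι → K} {f : K⟦X⟧}
    (hf : f * ∏ g ∈ s, (1 - C (α g) * X) = 1) : eulerOp f = powerSumSeries s α * f := by
  have hd := congrArg eulerOp hf
  rw [eulerOp_mul, eulerOp_prod_one_sub, eulerOp_one] at hd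
  linear_combination f * hd - (eulerOp f - powerSumSeries s α * f) * hf

theorem constantCoeff_eq_one_of_mul_prod {s : Finset ι} {α : ι → K} {f : K⟦X⟧}
    (hf : f * ∏ g ∈ s, (1 - C (α g) * X) = 1) : constantCoeff f = 1 := by
  simpa using congrArg constantCoeff hf

end PowerSums

end PowerSeries

open PowerSeries

theorem mul_sum_zpow_eq_sub {F : Type*} [Field F] {y : F} (hy : y ≠ 0) (n : ℕ) :
    (y⁻¹ - y) * ∑ g ∈ range n, y ^ ((n : ℤ) - (2 * g + 1)) = y ^ (-(n : ℤ)) - y ^ (n : ℤ) := by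
  induction n with
  | zero => simp
  | succ n ih =>
    have hshift : ∑ g ∈ range n, y ^ (((n + 1 : ℕ) : ℤ) - (2 * g + 1))
        = y * ∑ g ∈ range n, y ^ ((n : ℤ) - (2 * g + 1)) := by
      rw [mul_sum]
      refine sum_congr rfl fun g _ => ?_
      rw [← zpow_one_add₀ hy]
      push_cast
      ring_nf
    rw [sum_range_succ, hshift, mul_add, ← mul_assoc, mul_comm (y⁻¹ - y) y, mul_assoc, ih]
    have hlast : ((n + 1 : ℕ) : ℤ) - (2 * (n : ℤ) + 1) = -(n : ℤ) := by push_cast; ring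
    rw [hlast]
    simp only [zpow_neg, zpow_natCast, Nat.cast_add, Nat.cast_one, zpow_add_one₀ hy]
    field_simp
    ring

/-- `[n] = (q^{-n} - q^n) / (q^{-1} - q)`. -/
theorem X_inv_sub_X_mul_qIntF (n : ℕ) :
    (RatFunc.X⁻¹ - RatFunc.X) * qIntF n = RatFunc.X ^ (-(n : ℤ)) - RatFunc.X ^ (n : ℤ) :=
  mul_sum_zpow_eq_sub RatFunc.X_ne_zero n

namespace RatFunc

variable {K : Type*} [Field K]

theorem X_pow_ne_one {m : ℕ} (hm : m ≠ 0) : (X : RatFunc K) ^ m ≠ 1 := by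
  rw [← algebraMap_X, ← map_pow, ← map_one (algebraMap (Polynomial K) (RatFunc K)), Ne,
    (algebraMap_injective K).eq_iff]
  intro h
  simpa [hm] using congrArg Polynomial.natDegree h

theorem X_zpow_neg_sub_X_zpow_ne_zero {n : ℕ} (hn : n ≠ 0) :
    (X : RatFunc K) ^ (-(n : ℤ)) - X ^ (n : ℤ) ≠ 0 := by
  rw [sub_ne_zero, zpow_neg, zpow_natCast, Ne, inv_eq_iff_eq_inv,
    ← mul_eq_one_iff_eq_inv₀ (pow_ne_zero _ X_ne_zero), ← pow_add]
  exact X_pow_ne_one (by omega)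

end RatFunc

theorem qIntF_ne_zero {n : ℕ} (hn : n ≠ 0) : qIntF n ≠ 0 := by
  intro h
  apply RatFunc.X_zpow_neg_sub_X_zpow_ne_zero (K := ℚ) hn
  rw [← X_inv_sub_X_mul_qIntF, h, mul_zero]

theorem qIntF_mul (k χ : ℕ) :
    qIntF (k * χ) = qIntF k * ∑ g ∈ range χ, (RatFunc.X ^ ((χ : ℤ) - (2 * g + 1))) ^ k := by
  have hX : (RatFunc.X⁻¹ - RatFunc.X : RatFunc ℚ) ≠ 0 := by
    simpa using RatFunc.X_zpow_neg_sub_X_zpow_ne_zero (K := ℚ) one_ne_zero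
  have hXk : (RatFunc.X : RatFunc ℚ) ^ k ≠ 0 := pow_ne_zero _ RatFunc.X_ne_zero
  apply mul_left_cancel₀ hX
  have hinv : (RatFunc.X : RatFunc ℚ) ^ (-(k : ℤ)) - RatFunc.X ^ (k : ℤ)
      = (RatFunc.X ^ k)⁻¹ - RatFunc.X ^ k := by rw [zpow_neg, zpow_natCast]
  have hswap : ∀ e : ℤ, ((RatFunc.X : RatFunc ℚ) ^ e) ^ k = (RatFunc.X ^ k) ^ e := fun e => by
    rw [← zpow_natCast, ← zpow_mul, ← zpow_natCast, ← zpow_mul, mul_comm]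
  rw [X_inv_sub_X_mul_qIntF, ← mul_assoc, X_inv_sub_X_mul_qIntF, hinv]
  simp only [hswap]
  rw [mul_sum_zpow_eq_sub hXk, ← zpow_natCast RatFunc.X k, ← zpow_mul, ← zpow_mul]
  push_cast
  ring_nf

section Generators

variable {A : Type*} [Ring A] [Algebra ℚ A]

/-- `Σ_{r ≥ 1} P_r X^r / r`; the `r = 0` term vanishes because `(0 : ℚ)⁻¹ = 0`. -/
noncomputable def logSeries (P : ℕ → A) : A⟦X⟧ :=
  mk fun r => (r : ℚ)⁻¹ • P r

theorem constantCoeff_logSeries (P : ℕ → A) : constantCoeff (logSeries P) = 0 := by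
  rw [← coeff_zero_eq_constantCoeff_apply, logSeries, coeff_mk, Nat.cast_zero, inv_zero, zero_smul]

theorem coeff_eulerOp_logSeries (P : ℕ → A) (r : ℕ) :
    coeff r (eulerOp (logSeries P)) = if r = 0 then 0 else P r := by
  rw [coeff_eulerOp, logSeries, coeff_mk]
  split_ifs with hr
  · rw [hr, zero_smul]
  · rw [← Nat.cast_smul_eq_nsmul ℚ, smul_smul, mul_inv_cancel₀ (Nat.cast_ne_zero.mpr hr),
      one_smul]

theorem commute_eulerOp_logSeries {P : ℕ → A}
    (hP : ∀ m n, 1 ≤ m → 1 ≤ n → Commute (P m) (P n)) :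
    Commute (logSeries P) (eulerOp (logSeries P)) :=
  commute_of_forall_coeff_commute fun i j => by
    rw [logSeries, coeff_mk, ← logSeries, coeff_eulerOp_logSeries]
    split_ifs with hj
    · exact Commute.zero_right _
    rcases Nat.eq_zero_or_pos i with rfl | hi
    · simp
    · exact (hP i j hi (by omega)).smul_left _

theorem C_mul_eulerOp_logSeries {K : Type*} [CommSemiring K] [Algebra K A] {Pp Pm : ℕ → A}
    {b : K⟦X⟧} (hrel : ∀ k r, 1 ≤ k → 1 ≤ r →
      Pm k * Pp r = Pp r * Pm k + if k = r then r • algebraMap K A (coeff r b) else 0) (k : ℕ) :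
    C (coeff k (eulerOp (logSeries Pm))) * eulerOp (logSeries Pp)
      = eulerOp (logSeries Pp) * C (coeff k (eulerOp (logSeries Pm)))
        + eulerOp (monomial k (algebraMap K A (coeff k b))) := by
  ext1 r
  rw [map_add, coeff_C_mul, coeff_mul_C, eulerOp_monomial, coeff_monomial,
    coeff_eulerOp_logSeries, coeff_eulerOp_logSeries]
  rcases Nat.eq_zero_or_pos k with rfl | hk
  · simp
  rcases Nat.eq_zero_or_pos r with rfl | hr
  · simp [hk.ne]
  rw [if_neg hk.ne', if_neg hr.ne', hrel k r hk hr]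
  obtain rfl | hkr := eq_or_ne k r
  · simp
  · simp [hkr, hkr.symm]

end Generators

theorem qIntF_mul_div_qIntF (χ : ℕ) {r : ℕ} (hr : r ≠ 0) :
    qIntF (r * χ) * (r : RatFunc ℚ) / qIntF r
      = r • coeff r (powerSumSeries (range χ) fun g => RatFunc.X ^ ((χ : ℤ) - (2 * g + 1))) := by
  rw [coeff_powerSumSeries _ _ hr, qIntF_mul, nsmul_eq_mul]
  field_simp [qIntF_ne_zero hr]

theorem heisenberg_h_h_commutation_general
    (H : Type*) [Ring H] [Algebra (RatFunc ℚ) H] [Algebra ℚ H]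
    (χ : ℕ) (Pp Pm : ℕ → H)
    (hpp : ∀ m n, 1 ≤ m → 1 ≤ n → Commute (Pp m) (Pp n))
    (hmm : ∀ m n, 1 ≤ m → 1 ≤ n → Commute (Pm m) (Pm n))
    (hrel : ∀ m n, 1 ≤ m → 1 ≤ n →
      Pm m * Pp n = Pp n * Pm m +
        (if m = n then algebraMap (RatFunc ℚ) H (qIntF (n * χ) * n / qIntF n) else 0))
    (hp hm : ℕ → H)
    (hhp : PowerSeries.mk hp = expH (PowerSeries.mk fun r => ((r : ℚ)⁻¹) • Pp r))
    (hhm : PowerSeries.mk hm = expH (PowerSeries.mk fun r => ((r : ℚ)⁻¹) • Pm r))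
    (c : ℕ → RatFunc ℚ)
    (hc : PowerSeries.mk c *
        ∏ g ∈ Finset.range χ,
          (1 - PowerSeries.C (R := RatFunc ℚ) (RatFunc.X ^ ((χ : ℤ) - (2 * g + 1))) *
            PowerSeries.X) = 1)
    (m n : ℕ) :
    hm n * hp m =
      ∑ r ∈ Finset.range (min m n + 1),
        algebraMap (RatFunc ℚ) H (c r) * (hp (m - r) * hm (n - r)) := by
  have hp_eq : ∀ d, hp d = coeff d (expH (logSeries Pp)) := by simp [logSeries, ← hhp]
  have hm_eq : ∀ d, hm d = coeff d (expH (logSeries Pm)) := by simp [logSeries, ← hhm]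
  have hc_eq : ∀ r, c r = coeff r (mk c) := by simp
  simp only [hp_eq, hm_eq, hc_eq]
  exact coeff_expH_mul_coeff_expH (constantCoeff_logSeries Pp) (constantCoeff_logSeries Pm)
    (commute_eulerOp_logSeries hpp) (commute_eulerOp_logSeries hmm)
    (constantCoeff_powerSumSeries _ _) (constantCoeff_eq_one_of_mul_prod hc)
    (eulerOp_eq_powerSumSeries_mul hc)
    (C_mul_eulerOp_logSeries fun k r hk hr => by
      rw [hrel k r hk hr, qIntF_mul_div_qIntF χ (by omega), map_nsmul]) m n

/-- in the quantum Heisenberg algebra `H` (over `ℚ(q)`) with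
generators `p⁺_m, p⁻_m` (`m ≥ 1`) satisfying
`p⁻_m p⁺_n = p⁺_n p⁻_m + δ_{mn} [nχ] n/[n]` for a fixed `χ ∈ ℤ_{≥0}`, the
elements `h⁺_n, h⁻_n` defined by `Σ h^±_n t^n = exp(Σ_{r≥1} p^±_r t^r/r)`
satisfy `h⁻_n h⁺_m = Σ_{r=0}^{min(m,n)} c_r h⁺_{m-r} h⁻_{n-r}`, where
`Σ_r c_r u^r = Π_{g=0}^{χ-1} (1 - q^{χ-(2g+1)} u)^{-1}`
(i.e. `c_r = qdim(S^r V)` for `V` with `qdim(V) = [χ]`). -/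
theorem heisenberg_h_h_commutation
    (H : Type*) [Ring H] [Algebra (RatFunc ℚ) H] [Algebra ℚ H]
    [IsScalarTower ℚ (RatFunc ℚ) H]
    (χ : ℕ) (Pp Pm : ℕ → H)
    (hpp : ∀ m n, 1 ≤ m → 1 ≤ n → Commute (Pp m) (Pp n))
    (hmm : ∀ m n, 1 ≤ m → 1 ≤ n → Commute (Pm m) (Pm n))
    (hrel : ∀ m n, 1 ≤ m → 1 ≤ n →
      Pm m * Pp n = Pp n * Pm m +
        (if m = n then algebraMap (RatFunc ℚ) H (qIntF (n * χ) * n / qIntF n) else 0))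
    (hp hm : ℕ → H)
    (hhp : PowerSeries.mk hp = expH (PowerSeries.mk fun r => ((r : ℚ)⁻¹) • Pp r))
    (hhm : PowerSeries.mk hm = expH (PowerSeries.mk fun r => ((r : ℚ)⁻¹) • Pm r))
    (c : ℕ → RatFunc ℚ)
    (hc : PowerSeries.mk c *
        ∏ g ∈ Finset.range χ,
          (1 - PowerSeries.C (R := RatFunc ℚ) (RatFunc.X ^ ((χ : ℤ) - (2 * g + 1))) *
            PowerSeries.X) = 1)
    (m n : ℕ) :
    hm n * hp m =
      ∑ r ∈ Finset.range (min m n + 1),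
        algebraMap (RatFunc ℚ) H (c r) * (hp (m - r) * hm (n - r)) :=
  heisenberg_h_h_commutation_general H χ Pp Pm hpp hmm hrel hp hm hhp hhm c hc m n
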